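/- arXiv:0905.0933 — 4 statements merged into one kernel-verified Lean document; each statement's English description precedes it below -/
import Mathlib

section
/- Let ρ be a positive semidefinite Hermitian N×N matrix and T a symmetric unitary N×N matrix (T = Tᵀ). Then the matrix R = ρ T ρ* T† (where ρ* is the entrywise complex conjugate) has only real nonnegative eigenvalues; indeed R is similar to the positive semidefinite matrix (ρ^{1/2} T ρ*^{1/2})(ρ^{1/2} T ρ*^{1/2})†. -/
/-!
Write `A = ρ^{1/2}` and `G = T (ρ*)^{1/2}`, so that `R = A² G Gᴴ` while the target matrix is
`A G Gᴴ A`. Let `P` be the spectral projection onto `ker A`. Then `E = A + P` is invertible and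
`E A = A²`, so `R = E (A G Gᴴ E) E⁻¹` with `A G Gᴴ E = A G Gᴴ A + A G Gᴴ P`. As `A G Gᴴ A = K Kᴴ`
for `K = A G`, and `K Kᴴ` has the same range as `K`, some `W` solves `A G Gᴴ A W = A G Gᴴ P`;
the square-zero matrix `Z = (P - 1) W P` then satisfies
`(A G Gᴴ A + A G Gᴴ P)(1 + Z) = (1 + Z) A G Gᴴ A`. Similar matrices have the same spectrum, and
that of the positive semidefinite matrix `A G Gᴴ A` is real and nonnegative.
-/

open scoped ComplexConjugate
open Matrix
open scoped ComplexOrder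

/-- The positive semidefinite square root of a positive semidefinite matrix
(the definition Mathlib had in December 2024, since removed). -/
noncomputable def Matrix.PosSemidef.sqrt {n 𝕜 : Type*} [Fintype n] [DecidableEq n] [RCLike 𝕜]
    {A : Matrix n n 𝕜} (hA : A.PosSemidef) : Matrix n n 𝕜 :=
  (hA.1.eigenvectorUnitary : Matrix n n 𝕜) * diagonal ((↑) ∘ (√·) ∘ hA.1.eigenvalues) *
    (star (hA.1.eigenvectorUnitary : Matrix n n 𝕜))

namespace Matrix.PosSemidef

variable {n 𝕜 : Type*} [Fintype n] [DecidableEq n] [RCLike 𝕜] {A : Matrix n n 𝕜}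

theorem posSemidef_sqrt (hA : A.PosSemidef) : hA.sqrt.PosSemidef := by
  have hd : (diagonal ((↑) ∘ (√·) ∘ hA.1.eigenvalues) : Matrix n n 𝕜).PosSemidef := by
    rw [posSemidef_diagonal_iff]
    intro i
    simp only [Function.comp_apply, RCLike.ofReal_nonneg, Real.sqrt_nonneg]
  rw [Matrix.PosSemidef.sqrt, star_eq_conjTranspose]
  exact hd.mul_mul_conjTranspose_same _

theorem sqrt_mul_self (hA : A.PosSemidef) : hA.sqrt * hA.sqrt = A := by
  have hU : star (hA.1.eigenvectorUnitary : Matrix n n 𝕜) * hA.1.eigenvectorUnitary = 1 :=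
    (mem_unitaryGroup_iff').mp hA.1.eigenvectorUnitary.2
  conv_rhs => rw [hA.1.spectral_theorem]
  simp only [Matrix.PosSemidef.sqrt, Unitary.conjStarAlgAut_apply, mul_assoc]
  rw [← mul_assoc (star _) _ (_ * star _), hU, one_mul, ← mul_assoc (diagonal _) (diagonal _),
    diagonal_mul_diagonal]
  congr 3
  funext i
  simp only [Function.comp_apply]
  rw [← RCLike.ofReal_mul, Real.mul_self_sqrt (hA.eigenvalues_nonneg i)]

end Matrix.PosSemidef

theorem exists_units_semiconjBy_mul_mul_self {α : Type*} [Ring α] {a p q w : α}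
    (hp : IsIdempotentElem p) (hap : a * p = 0) (hpa : p * a = 0) (he : IsUnit (a + p))
    (hw : a * q * a * w = a * q * p) :
    ∃ u : αˣ, SemiconjBy (u : α) (a * q * a) (a * a * q) := by
  set z := (p - 1) * w * p
  have hpz : p * z = 0 := by
    simp only [z, ← mul_assoc, mul_sub, hp.eq, mul_one, sub_self, zero_mul]
  have hza : z * a = 0 := by simp only [z, mul_assoc, hpa, mul_zero]
  have hz : IsUnit (1 + z) :=
    IsNilpotent.isUnit_one_add ⟨2, by rw [pow_two, mul_assoc, hpz, mul_zero]⟩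
  have hzqa : (1 + z) * (a * q * a) = a * q * a := by
    rw [add_mul, one_mul, ← mul_assoc, ← mul_assoc, hza, zero_mul, zero_mul, add_zero]
  have haqe : a * q * (a + p) * (1 + z) = a * q * a := by
    have haz : a * q * a * z = -(a * q * p) := by
      calc a * q * a * z = a * q * (a * (p - 1)) * w * p := by simp only [z, mul_assoc]
        _ = -(a * q * a * w * p) := by
          simp only [mul_sub, hap, mul_one, zero_sub, mul_neg, neg_mul, mul_assoc]
        _ = -(a * q * p) := by rw [hw, mul_assoc, hp.eq]
    have hpz' : a * q * p * z = 0 := by rw [mul_assoc, hpz, mul_zero]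
    rw [mul_add, mul_add, add_mul, add_mul, mul_one, mul_one, haz, hpz']
    abel
  have hea : (a + p) * a = a * a := by rw [add_mul, hpa, add_zero]
  refine ⟨he.unit * hz.unit, ?_⟩
  simp only [SemiconjBy, Units.val_mul, IsUnit.unit_spec]
  calc (a + p) * (1 + z) * (a * q * a) = (a + p) * (a * q * (a + p) * (1 + z)) := by
        rw [haqe, mul_assoc, hzqa]
    _ = a * a * q * ((a + p) * (1 + z)) := by simp only [← mul_assoc, hea]

namespace Matrix

theorem range_mulVecLin_self_mul_conjTranspose {m n R : Type*} [Fintype m] [Fintype n]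
    [Field R] [PartialOrder R] [StarRing R] [StarOrderedRing R] (K : Matrix m n R) :
    LinearMap.range (K * Kᴴ).mulVecLin = LinearMap.range K.mulVecLin :=
  Submodule.eq_of_le_of_finrank_eq
    (by rw [mulVecLin_mul]; exact LinearMap.range_comp_le_range _ _)
    (rank_self_mul_conjTranspose K)

theorem exists_self_mul_conjTranspose_mul_eq {m n p R : Type*} [Fintype m] [Fintype n]
    [Field R] [PartialOrder R] [StarRing R] [StarOrderedRing R] (K : Matrix m n R)
    (C : Matrix n p R) : ∃ W : Matrix m p R, K * Kᴴ * W = K * C := by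
  choose w hw using fun j => (range_mulVecLin_self_mul_conjTranspose K).ge
    (LinearMap.mem_range_self K.mulVecLin fun i => C i j)
  refine ⟨of fun i j => w j i, ?_⟩
  ext i j
  exact congrFun (hw j) i

namespace IsHermitian

variable {n 𝕜 : Type*} [Fintype n] [DecidableEq n] [RCLike 𝕜] {A : Matrix n n 𝕜}

theorem exists_isIdempotentElem_isUnit_add (hA : A.IsHermitian) :
    ∃ P : Matrix n n 𝕜, IsIdempotentElem P ∧ A * P = 0 ∧ P * A = 0 ∧ IsUnit (A + P) := by
  have hA' : IsSelfAdjoint A := hA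
  set f : ℝ → ℝ := fun x => if x = 0 then 1 else 0
  have hf : ContinuousOn f (spectrum ℝ A) := A.finite_real_spectrum.continuousOn f
  have hAf : A * cfc f A = 0 := by
    have h : (fun x => x * f x) = 0 := by funext x; by_cases hx : x = 0 <;> simp [f, hx]
    rw [← cfc_zero ℝ A, ← h, cfc_mul (fun x => x) f A, cfc_id' ℝ A]
  refine ⟨cfc f A, ?_, hAf, ?_, ?_⟩
  · rw [IsIdempotentElem, ← cfc_mul f f A]
    refine cfc_congr fun x _ => ?_
    by_cases hx : x = 0 <;> simp [f, hx]
  · simpa only [hAf, cfc_id' ℝ A] using (cfc_commute_cfc (fun x => x) f A).eq.symm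
  · rw [show A + cfc f A = cfc (fun x => x + f x) A by
        rw [cfc_add (a := A) (fun x => x) f, cfc_id' ℝ A],
      isUnit_cfc_iff _ A]
    intro x _
    by_cases hx : x = 0 <;> simp [f, hx]

theorem exists_units_semiconjBy {m : Type*} [Fintype m] (hA : A.IsHermitian)
    (G : Matrix n m 𝕜) :
    ∃ u : (Matrix n n 𝕜)ˣ, SemiconjBy (u : Matrix n n 𝕜) (A * G * (A * G)ᴴ) (A * A * (G * Gᴴ)) := by
  obtain ⟨P, hP, hAP, hPA, hE⟩ := hA.exists_isIdempotentElem_isUnit_add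
  obtain ⟨W, hW⟩ := exists_self_mul_conjTranspose_mul_eq (A * G) (Gᴴ * P)
  have hAGA : A * G * (A * G)ᴴ = A * (G * Gᴴ) * A := by
    rw [conjTranspose_mul, hA.eq]
    simp only [Matrix.mul_assoc]
  rw [hAGA] at hW ⊢
  exact exists_units_semiconjBy_mul_mul_self hP hAP hPA hE
    (by rw [hW]; simp only [Matrix.mul_assoc])

end IsHermitian

end Matrix

theorem stmt3_general (N : ℕ) (ρ T : Matrix (Fin N) (Fin N) ℂ)
    (hρ : ρ.PosSemidef) (hρc : (ρ.map (starRingEnd ℂ)).PosSemidef)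
    (R : Matrix (Fin N) (Fin N) ℂ)
    (hR : R = ρ * (T * ρ.map (starRingEnd ℂ) * Tᴴ)) :
    (∀ μ ∈ spectrum ℂ R, ∃ t : ℝ, 0 ≤ t ∧ μ = (t : ℂ)) ∧
    ∃ S : Matrix (Fin N) (Fin N) ℂ, IsUnit S.det ∧
      R = S * ((hρ.sqrt * T * hρc.sqrt) * (hρ.sqrt * T * hρc.sqrt)ᴴ) * S⁻¹ := by
  set M := hρ.sqrt * T * hρc.sqrt with hM
  obtain ⟨u, hu⟩ := hρ.posSemidef_sqrt.isHermitian.exists_units_semiconjBy (T * hρc.sqrt)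
  have hRu : R = u * (M * Mᴴ) * (u⁻¹ : (Matrix (Fin N) (Fin N) ℂ)ˣ) := by
    have hG : (T * hρc.sqrt) * (T * hρc.sqrt)ᴴ = T * ρ.map (starRingEnd ℂ) * Tᴴ := by
      rw [conjTranspose_mul, hρc.posSemidef_sqrt.isHermitian.eq, mul_assoc,
        ← mul_assoc hρc.sqrt, hρc.sqrt_mul_self, mul_assoc]
    calc R = hρ.sqrt * hρ.sqrt * ((T * hρc.sqrt) * (T * hρc.sqrt)ᴴ) := by
          rw [hR, hρ.sqrt_mul_self, hG]
      _ = u * (M * Mᴴ) * (u⁻¹ : (Matrix (Fin N) (Fin N) ℂ)ˣ) := by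
          rw [Units.eq_mul_inv_iff_mul_eq, ← hu.eq, hM, mul_assoc hρ.sqrt T]
  refine ⟨fun μ hμ => ?_, u, (isUnit_iff_isUnit_det _).mp u.isUnit, by rw [hRu, coe_units_inv]⟩
  rw [hRu, spectrum.units_conjugate] at hμ
  have hμ_nonneg : 0 ≤ μ :=
    (posSemidef_iff_isHermitian_and_spectrum_nonneg.mp
      (posSemidef_self_mul_conjTranspose M)).2 hμ
  obtain ⟨t, ht, rfl⟩ := RCLike.nonneg_iff_exists_ofReal.mp hμ_nonneg
  exact ⟨t, ht, rfl⟩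

/-- For ρ positive semidefinite and T a symmetric unitary, R = ρ T ρ* T† has only
real nonnegative eigenvalues; indeed R is similar to the positive semidefinite
matrix (ρ^{1/2} T ρ*^{1/2})(ρ^{1/2} T ρ*^{1/2})†. -/
theorem stmt3 (N : ℕ) (ρ T : Matrix (Fin N) (Fin N) ℂ)
    (hρ : ρ.PosSemidef) (hρc : (ρ.map (starRingEnd ℂ)).PosSemidef)
    (hT : T ∈ Matrix.unitaryGroup (Fin N) ℂ) (hTsymm : Tᵀ = T)
    (R : Matrix (Fin N) (Fin N) ℂ)
    (hR : R = ρ * (T * ρ.map (starRingEnd ℂ) * Tᴴ)) :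
    (∀ μ ∈ spectrum ℂ R, ∃ t : ℝ, 0 ≤ t ∧ μ = (t : ℂ)) ∧
    ∃ S : Matrix (Fin N) (Fin N) ℂ, IsUnit S.det ∧
      R = S * ((hρ.sqrt * T * hρc.sqrt) * (hρ.sqrt * T * hρc.sqrt)ᴴ) * S⁻¹ :=
  stmt3_general N ρ T hρ hρc R hR
end

section
/- For a complex symmetric 2×2 matrix v with entries v₁₁, v₁₂, v₂₂, set ṽ = (ṽ₁, ṽ₂, ṽ₃) = (v₁₁/√2, v₁₂, v₂₂/√2) ∈ ℂ³. Then |2ṽ₁ṽ₃ − ṽ₂²|² = ⟨ṽ⊗ṽ| A_bos |ṽ⊗ṽ⟩, where A_bos = Σ_{i,j=1}^3 |e_i⟩⟨e_j| ⊗ T|e_i⟩⟨e_j|T† and T is the 3×3 matrix with T e₁ = e₃, T e₂ = −e₂, T e₃ = e₁. -/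
open scoped BigOperators ComplexConjugate
open Matrix

/-- For a complex symmetric 2×2 matrix v, with ṽ = (v₁₁/√2, v₁₂, v₂₂/√2) ∈ ℂ³,
one has |2ṽ₁ṽ₃ − ṽ₂²|² (= |det v|²) = ⟨ṽ⊗ṽ|A_bos|ṽ⊗ṽ⟩, where
A_bos = Σ_{i,j} |e_i⟩⟨e_j| ⊗ T|e_i⟩⟨e_j|T† and T e₁=e₃, T e₂=−e₂, T e₃=e₁. -/
theorem stmt5 (v : Matrix (Fin 2) (Fin 2) ℂ) (hv : vᵀ = v)
    (w : Fin 3 → ℂ)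
    (hw : w 0 = v 0 0 / Real.sqrt 2 ∧ w 1 = v 0 1 ∧ w 2 = v 1 1 / Real.sqrt 2)
    (T : Matrix (Fin 3) (Fin 3) ℂ)
    (hT : T = !![0,0,1; 0,-1,0; 1,0,0])
    (A : Matrix (Fin 3 × Fin 3) (Fin 3 × Fin 3) ℂ)
    (hA : ∀ a b c d : Fin 3, A (a, b) (c, d) = T b a * conj (T d c)) :
    ((‖2 * w 0 * w 2 - w 1 ^ 2‖ ^ 2 : ℝ) : ℂ)
      = ∑ a, ∑ b, ∑ c, ∑ d,
          conj (w a) * conj (w b) * A (a, b) (c, d) * w c * w d := by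
  have key : ((‖2 * w 0 * w 2 - w 1 ^ 2‖ ^ 2 : ℝ) : ℂ)
      = conj (2 * w 0 * w 2 - w 1 ^ 2) * (2 * w 0 * w 2 - w 1 ^ 2) := by
    rw [← Complex.normSq_eq_norm_sq, Complex.normSq_eq_conj_mul_self]
  rw [key]
  simp only [hA, hT, Fin.sum_univ_three]
  norm_num [Matrix.cons_val_zero, Matrix.cons_val_one, Matrix.vecHead, Matrix.vecTail, map_ofNat, Matrix.cons_val_two, Matrix.cons_val]
  ring
end

section
/- Let r₁, r₂, r₃ > 0 with r₁ + r₂ + r₃ = 1, and let s₁, s₂, s₃ ≥ 0 satisfy r₁r₂r₃ ≥ r₁s₁ + r₂s₂ + r₃s₃. Then s₁ + s₂ + s₃ < 1/4. -/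
/-!
By AM–GM on the other two factors, `r₁ r₂ r₃ < rᵢ / 4` for every `i`, since those two sum to
`1 - rᵢ < 1`. With `m = min rᵢ` this gives `m (s₁ + s₂ + s₃) ≤ ∑ rᵢ sᵢ ≤ r₁ r₂ r₃ < m / 4`.
-/

lemma four_mul_mul_lt_one_of_add_lt_one {b c : ℝ} (h₀ : 0 ≤ b + c) (h₁ : b + c < 1) :
    4 * (b * c) < 1 :=
  calc 4 * (b * c) = 4 * b * c := by ring
    _ ≤ (b + c) ^ 2 := four_mul_le_sq_add b c
    _ < 1 := by nlinarith

lemma four_mul_mul_mul_lt_left {a b c : ℝ} (ha : 0 < a) (hb : 0 ≤ b) (hc : 0 ≤ c)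
    (h : a + b + c = 1) : 4 * (a * b * c) < a := by
  have hbc : 4 * (b * c) < 1 := four_mul_mul_lt_one_of_add_lt_one (by positivity) (by linarith)
  calc 4 * (a * b * c) = a * (4 * (b * c)) := by ring
    _ < a * 1 := mul_lt_mul_of_pos_left hbc ha
    _ = a := mul_one a

lemma mul_add_add_le_of_le {m r₁ r₂ r₃ s₁ s₂ s₃ : ℝ}
    (h₁ : m ≤ r₁) (h₂ : m ≤ r₂) (h₃ : m ≤ r₃) (hs₁ : 0 ≤ s₁) (hs₂ : 0 ≤ s₂) (hs₃ : 0 ≤ s₃) :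
    m * (s₁ + s₂ + s₃) ≤ r₁ * s₁ + r₂ * s₂ + r₃ * s₃ :=
  calc m * (s₁ + s₂ + s₃) = m * s₁ + m * s₂ + m * s₃ := by ring
    _ ≤ r₁ * s₁ + r₂ * s₂ + r₃ * s₃ := by gcongr

/-- If r₁,r₂,r₃ > 0 sum to 1 and s₁,s₂,s₃ ≥ 0 satisfy
r₁r₂r₃ ≥ r₁s₁ + r₂s₂ + r₃s₃, then s₁ + s₂ + s₃ < 1/4. -/
theorem stmt9 (r₁ r₂ r₃ s₁ s₂ s₃ : ℝ)
    (hr₁ : 0 < r₁) (hr₂ : 0 < r₂) (hr₃ : 0 < r₃)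
    (hsum : r₁ + r₂ + r₃ = 1)
    (hs₁ : 0 ≤ s₁) (hs₂ : 0 ≤ s₂) (hs₃ : 0 ≤ s₃)
    (hmain : r₁ * s₁ + r₂ * s₂ + r₃ * s₃ ≤ r₁ * r₂ * r₃) :
    s₁ + s₂ + s₃ < 1 / 4 := by
  set m := min r₁ (min r₂ r₃)
  have hm : 0 < m := lt_min hr₁ (lt_min hr₂ hr₃)
  have h₁ := four_mul_mul_mul_lt_left hr₁ hr₂.le hr₃.le hsum
  have h₂ := four_mul_mul_mul_lt_left hr₂ hr₃.le hr₁.le (by linarith)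
  have h₃ := four_mul_mul_mul_lt_left hr₃ hr₁.le hr₂.le (by linarith)
  have hprod : 4 * (r₁ * r₂ * r₃) < m := lt_min h₁ (lt_min (by linarith) (by linarith))
  have hweighted : m * (s₁ + s₂ + s₃) ≤ r₁ * s₁ + r₂ * s₂ + r₃ * s₃ :=
    mul_add_add_le_of_le (min_le_left _ _) ((min_le_right _ _).trans (min_le_left _ _))
      ((min_le_right _ _).trans (min_le_right _ _)) hs₁ hs₂ hs₃
  have hlt : m * (4 * (s₁ + s₂ + s₃)) < m * 1 := by linarith
  linarith [lt_of_mul_lt_mul_left hlt hm.le]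
end

section
/- Let ρ be a 3×3 Hermitian positive semidefinite matrix with Tr ρ = 1, written in a basis where its real part is diagonal: ρ = diag(λ₁,λ₂,λ₃) + i·(antisymmetric part with entries ±v₁,±v₂,±v₃ as in ρ₂₃ = −iv₁, ρ₁₃ = iv₂, ρ₁₂ = −iv₃). Assume λ₁ ≥ λ₂ ≥ λ₃ > 0 and det ρ > 0, and set q₁ = λ₂+λ₃−λ₁, q₂ = λ₁+λ₃−λ₂, q₃ = λ₁+λ₂−λ₃ (so q₂, q₃ > 0 and q₁+q₂+q₃ = 1). If q₁q₂q₃ > 4q₁q₂v₃² + 4q₁q₃v₂² + 4q₂q₃v₁², then q₁q₂ + q₁q₃ + q₂q₃ > 4(q₁+q₂)v₃² + 4(q₁+q₃)v₂² + 4(q₂+q₃)v₁². -/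
open Matrix Complex
open scoped ComplexOrder

/-!
Put `D = l₁l₂l₃ - l₁v₁² - l₂v₂² - l₃v₃²`, the determinant of `ρ`. Since `q_j + q_k = 2 l_i` and
`∑ q_i = 1`, the gap between the two sides of the conclusion is exactly `q₁q₂q₃ + 8D`, which is
positive as soon as `q₁ ≥ 0`. The case `q₁ < 0`, i.e. `l₁ > l₂ + l₃`, cannot occur: dividing the
hypothesis by `q₁` gives `q₂q₃ < 4q₂v₃² + 4q₃v₂²`, while `l₁ > l₂ + l₃` gives `4l₁l₂ ≤ q₃` and
`4l₁l₃ ≤ q₂`, and together with `D > 0` this yields `q₂q₃ l₁l₂l₃ < q₂q₃ l₁l₂l₃`.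
-/

theorem det_canonical (l₁ l₂ l₃ v₁ v₂ v₃ : ℝ) :
    (!![(l₁ : ℂ), -I * v₃, I * v₂;
        I * v₃, (l₂ : ℂ), -I * v₁;
        -I * v₂, I * v₁, (l₃ : ℂ)] : Matrix (Fin 3) (Fin 3) ℂ).det
      = ((l₁ * l₂ * l₃ - l₁ * v₁ ^ 2 - l₂ * v₂ ^ 2 - l₃ * v₃ ^ 2 : ℝ) : ℂ) := by
  simp only [det_fin_three, of_apply, cons_val', cons_val_zero, cons_val_fin_one,
    cons_val_one, cons_val, ofReal_sub, ofReal_mul, ofReal_pow]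
  linear_combination (l₁ * v₁ ^ 2 + l₂ * v₂ ^ 2 + l₃ * v₃ ^ 2) * I_sq

theorem four_mul_le_sq_sub_sq {a b c : ℝ} (hc : 0 ≤ c) (h : b + c < a) :
    4 * a * b ≤ (a + b) ^ 2 - c ^ 2 := by
  nlinarith

section

variable {l₁ l₂ l₃ v₁ v₂ v₃ q₁ q₂ q₃ : ℝ}

theorem sum_mul_pairs_sub_eq (htr : l₁ + l₂ + l₃ = 1)
    (hq₁ : q₁ = l₂ + l₃ - l₁) (hq₂ : q₂ = l₁ + l₃ - l₂) (hq₃ : q₃ = l₁ + l₂ - l₃) :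
    q₁ * q₂ + q₁ * q₃ + q₂ * q₃
        - (4 * (q₁ + q₂) * v₃ ^ 2 + 4 * (q₁ + q₃) * v₂ ^ 2 + 4 * (q₂ + q₃) * v₁ ^ 2)
      = q₁ * q₂ * q₃ + 8 * (l₁ * l₂ * l₃ - l₁ * v₁ ^ 2 - l₂ * v₂ ^ 2 - l₃ * v₃ ^ 2) := by
  subst hq₁ hq₂ hq₃
  linear_combination ((l₁ + l₂ + l₃) ^ 2 - 4 * (l₁ * l₂ + l₁ * l₃ + l₂ * l₃)) * htr

theorem q₁_nonneg_of_det_pos (hl₂ : 0 < l₂) (hl₃ : 0 < l₃) (htr : l₁ + l₂ + l₃ = 1)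
    (hq₁ : q₁ = l₂ + l₃ - l₁) (hq₂ : q₂ = l₁ + l₃ - l₂) (hq₃ : q₃ = l₁ + l₂ - l₃)
    (hdet : 0 < l₁ * l₂ * l₃ - l₁ * v₁ ^ 2 - l₂ * v₂ ^ 2 - l₃ * v₃ ^ 2)
    (hmain : 4 * q₁ * q₂ * v₃ ^ 2 + 4 * q₁ * q₃ * v₂ ^ 2 + 4 * q₂ * q₃ * v₁ ^ 2
        < q₁ * q₂ * q₃) :
    0 ≤ q₁ := by
  by_contra! hneg
  have hl₁ : l₂ + l₃ < l₁ := by linarith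
  have hq₂ : 0 < q₂ := by linarith
  have hq₃ : 0 < q₃ := by linarith
  have h₁₂ : 4 * l₁ * l₂ ≤ q₃ := by
    have := four_mul_le_sq_sub_sq hl₃.le hl₁
    nlinarith
  have h₁₃ : 4 * l₁ * l₃ ≤ q₂ := by
    have := four_mul_le_sq_sub_sq hl₂.le (by linarith : l₃ + l₂ < l₁)
    nlinarith
  have key : q₂ * q₃ < 4 * q₂ * v₃ ^ 2 + 4 * q₃ * v₂ ^ 2 := by
    nlinarith [mul_nonneg (mul_nonneg hq₂.le hq₃.le) (sq_nonneg v₁)]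
  have hl : 0 < l₁ * l₂ * l₃ := mul_pos (mul_pos (by linarith) hl₂) hl₃
  refine lt_irrefl (q₂ * q₃ * (l₁ * l₂ * l₃)) ?_
  calc
    q₂ * q₃ * (l₁ * l₂ * l₃) < (4 * q₂ * v₃ ^ 2 + 4 * q₃ * v₂ ^ 2) * (l₁ * l₂ * l₃) :=
      mul_lt_mul_of_pos_right key hl
    _ = q₂ * (l₃ * v₃ ^ 2) * (4 * l₁ * l₂) + q₃ * (l₂ * v₂ ^ 2) * (4 * l₁ * l₃) := by ring
    _ ≤ q₂ * (l₃ * v₃ ^ 2) * q₃ + q₃ * (l₂ * v₂ ^ 2) * q₂ := by gcongr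
    _ = q₂ * q₃ * (l₃ * v₃ ^ 2 + l₂ * v₂ ^ 2) := by ring
    _ ≤ q₂ * q₃ * (l₁ * l₂ * l₃) := by
      have : 0 ≤ l₁ * v₁ ^ 2 := by nlinarith [sq_nonneg v₁]
      gcongr
      linarith

end

theorem stmt18_general (l₁ l₂ l₃ v₁ v₂ v₃ : ℝ)
    (hord : l₃ ≤ l₂ ∧ l₂ ≤ l₁) (hpos : 0 < l₃) (htr : l₁ + l₂ + l₃ = 1)
    (ρ : Matrix (Fin 3) (Fin 3) ℂ)
    (hρ : ρ = !![(l₁ : ℂ), -I * v₃, I * v₂;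
                 I * v₃, (l₂ : ℂ), -I * v₁;
                 -I * v₂, I * v₁, (l₃ : ℂ)])
    (hdet : 0 < ρ.det.re)
    (q₁ q₂ q₃ : ℝ)
    (hq₁ : q₁ = l₂ + l₃ - l₁) (hq₂ : q₂ = l₁ + l₃ - l₂) (hq₃ : q₃ = l₁ + l₂ - l₃)
    (hmain : 4 * q₁ * q₂ * v₃ ^ 2 + 4 * q₁ * q₃ * v₂ ^ 2 + 4 * q₂ * q₃ * v₁ ^ 2
        < q₁ * q₂ * q₃) :
    4 * (q₁ + q₂) * v₃ ^ 2 + 4 * (q₁ + q₃) * v₂ ^ 2 + 4 * (q₂ + q₃) * v₁ ^ 2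
      < q₁ * q₂ + q₁ * q₃ + q₂ * q₃ := by
  rw [hρ, det_canonical, ofReal_re] at hdet
  have hl₂ : 0 < l₂ := hpos.trans_le hord.1
  have hq₁_nonneg : 0 ≤ q₁ := q₁_nonneg_of_det_pos hl₂ hpos htr hq₁ hq₂ hq₃ hdet hmain
  have hq₂_pos : 0 < q₂ := by linarith
  have hq₃_pos : 0 < q₃ := by linarith
  have hgap := sum_mul_pairs_sub_eq (v₁ := v₁) (v₂ := v₂) (v₃ := v₃) htr hq₁ hq₂ hq₃
  have : 0 ≤ q₁ * q₂ * q₃ := by positivity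
  linarith

/-- For a spin-1 density matrix ρ in canonical form (real part diagonal),
with λ₁ ≥ λ₂ ≥ λ₃ > 0, Tr ρ = 1, det ρ > 0, setting q₁ = λ₂+λ₃−λ₁,
q₂ = λ₁+λ₃−λ₂, q₃ = λ₁+λ₂−λ₃: if q₁q₂q₃ > 4q₁q₂v₃² + 4q₁q₃v₂² + 4q₂q₃v₁²,
then q₁q₂ + q₁q₃ + q₂q₃ > 4(q₁+q₂)v₃² + 4(q₁+q₃)v₂² + 4(q₂+q₃)v₁². -/
theorem stmt18 (l₁ l₂ l₃ v₁ v₂ v₃ : ℝ)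
    (hord : l₃ ≤ l₂ ∧ l₂ ≤ l₁) (hpos : 0 < l₃) (htr : l₁ + l₂ + l₃ = 1)
    (ρ : Matrix (Fin 3) (Fin 3) ℂ)
    (hρ : ρ = !![(l₁ : ℂ), -I * v₃, I * v₂;
                 I * v₃, (l₂ : ℂ), -I * v₁;
                 -I * v₂, I * v₁, (l₃ : ℂ)])
    (hpsd : ρ.PosSemidef) (hdet : 0 < ρ.det.re)
    (q₁ q₂ q₃ : ℝ)
    (hq₁ : q₁ = l₂ + l₃ - l₁) (hq₂ : q₂ = l₁ + l₃ - l₂) (hq₃ : q₃ = l₁ + l₂ - l₃)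
    (hmain : 4 * q₁ * q₂ * v₃ ^ 2 + 4 * q₁ * q₃ * v₂ ^ 2 + 4 * q₂ * q₃ * v₁ ^ 2
        < q₁ * q₂ * q₃) :
    4 * (q₁ + q₂) * v₃ ^ 2 + 4 * (q₁ + q₃) * v₂ ^ 2 + 4 * (q₂ + q₃) * v₁ ^ 2
      < q₁ * q₂ + q₁ * q₃ + q₂ * q₃ :=
  stmt18_general l₁ l₂ l₃ v₁ v₂ v₃ hord hpos htr ρ hρ hdet q₁ q₂ q₃ hq₁ hq₂ hq₃ hmain
end
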